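/- Under the same setup (y = Ax + e, ‖x‖₀ ≤ s₁, |S| = s₂, x̄_S = A_S† y, x̄_{S^c} = 0, δ_{s₁+s₂} < 1), the ℓ₁-norm bound ‖x - x̄‖₁ ≤ √((s₁+s₂)/(1 - δ_{s₁+s₂}²)) ‖x_{S^c}‖₁ + (√((s₁+s₂)(1+δ_{s₂}))/(1-δ_{s₁+s₂})) ‖e‖₂ holds. -/

import Mathlib

/-!
Write `h = x - x̄` and `u = h_S`. The normal equations say that `A u` is orthogonal to the residual
`A h + e`, so `‖u‖² = ⟨u, h⟩ - ⟨A u, A h⟩ - ⟨A u, e⟩ ≤ δ_{s₁+s₂} ‖u‖ ‖h‖ + √(1 + δ_{s₂}) ‖u‖ ‖e‖`,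
the first term by restricted orthogonality (polarization of the RIP) since `u, h` live on the
`(s₁+s₂)`-set `supp x ∪ S`. Together with `‖h‖² = ‖u‖² + ‖x_{Sᶜ}‖²` this is a quadratic inequality
in `‖h‖` whose larger root gives the `ℓ₂` bound; the `ℓ₁` bound follows from
`‖h‖₁ ≤ √(s₁+s₂) ‖h‖₂` and `‖x_{Sᶜ}‖₂ ≤ ‖x_{Sᶜ}‖₁`.
-/

open Finset

/-- ℓ2 norm of a vector. -/
noncomputable def l2 {n : ℕ} (v : Fin n → ℝ) : ℝ := Real.sqrt (∑ i, v i ^ 2)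

/-- ℓ1 norm of a vector. -/
noncomputable def l1 {n : ℕ} (v : Fin n → ℝ) : ℝ := ∑ i, |v i|

/-- number of nonzero entries (ℓ0 "norm"). -/
noncomputable def spars {n : ℕ} (v : Fin n → ℝ) : ℕ := Set.ncard {i | v i ≠ 0}

/-- restriction of a vector to an index set (zero off the set). -/
def restr {n : ℕ} (S : Finset (Fin n)) (v : Fin n → ℝ) : Fin n → ℝ :=
  fun i => if i ∈ S then v i else 0

open Matrix

variable {m n : ℕ}

lemma l2_nonneg (v : Fin n → ℝ) : 0 ≤ l2 v := Real.sqrt_nonneg _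

lemma l2_sq (v : Fin n → ℝ) : l2 v ^ 2 = v ⬝ᵥ v := by
  rw [l2, Real.sq_sqrt (by positivity)]
  simp only [dotProduct, sq]

lemma l2_eq_zero {v : Fin n → ℝ} : l2 v = 0 ↔ v = 0 := by
  rw [← sq_eq_zero_iff, l2_sq, dotProduct_self_eq_zero]

@[simp]
lemma l2_zero : l2 (0 : Fin n → ℝ) = 0 := l2_eq_zero.2 rfl

@[simp]
lemma l2_neg (v : Fin n → ℝ) : l2 (-v) = l2 v := by
  simp [l2]

lemma l2_smul (c : ℝ) (v : Fin n → ℝ) : l2 (c • v) = |c| * l2 v := by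
  rw [l2, l2, ← Real.sqrt_sq_eq_abs, ← Real.sqrt_mul (sq_nonneg c), mul_sum]
  simp only [Pi.smul_apply, smul_eq_mul, mul_pow]

lemma dotProduct_le_l2_mul_l2 (u v : Fin n → ℝ) : u ⬝ᵥ v ≤ l2 u * l2 v :=
  Real.sum_mul_le_sqrt_mul_sqrt univ u v

lemma l1_nonneg (v : Fin n → ℝ) : 0 ≤ l1 v := sum_nonneg fun i _ => abs_nonneg (v i)

lemma l2_le_l1 (v : Fin n → ℝ) : l2 v ≤ l1 v := by
  rw [l2, Real.sqrt_le_left (l1_nonneg v)]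
  calc ∑ i, v i ^ 2 = ∑ i, |v i| ^ 2 := by simp only [sq_abs]
    _ ≤ l1 v ^ 2 := sum_sq_le_sq_sum_of_nonneg fun i _ => abs_nonneg (v i)

lemma spars_eq_card_filter (v : Fin n → ℝ) : spars v = #{i | v i ≠ 0} := by
  rw [spars, ← Set.ncard_coe_finset, coe_filter]
  simp

lemma spars_le_card {T : Finset (Fin n)} {v : Fin n → ℝ} (hv : ∀ i ∉ T, v i = 0) :
    spars v ≤ #T := by
  rw [spars_eq_card_filter]
  exact card_le_card fun i hi => by_contra fun hiT => (mem_filter.1 hi).2 (hv i hiT)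

lemma l1_le_sqrt_spars_mul_l2 (v : Fin n → ℝ) : l1 v ≤ √(spars v) * l2 v := by
  rw [l2, ← Real.sqrt_mul (Nat.cast_nonneg _), Real.le_sqrt (l1_nonneg v) (by positivity),
    spars_eq_card_filter]
  calc l1 v ^ 2 = (∑ i with v i ≠ 0, |v i|) ^ 2 := by
        rw [l1, sum_filter_of_ne fun i _ hi => abs_ne_zero.1 hi]
    _ ≤ #{i | v i ≠ 0} * ∑ i with v i ≠ 0, |v i| ^ 2 := sq_sum_le_card_mul_sum_sq
    _ ≤ #{i | v i ≠ 0} * ∑ i, v i ^ 2 := by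
        simp only [sq_abs]
        gcongr
        exact subset_univ _

lemma restr_of_notMem {S : Finset (Fin n)} (v : Fin n → ℝ) {i : Fin n} (hi : i ∉ S) :
    restr S v i = 0 :=
  if_neg hi

lemma restr_dotProduct_self (S : Finset (Fin n)) (v : Fin n → ℝ) :
    restr S v ⬝ᵥ v = l2 (restr S v) ^ 2 := by
  rw [l2_sq]
  refine sum_congr rfl fun i _ => ?_
  by_cases hi : i ∈ S <;> simp [restr, hi]

lemma l2_sq_eq_restr_add_restr_compl (S : Finset (Fin n)) (v : Fin n → ℝ) :
    l2 v ^ 2 = l2 (restr S v) ^ 2 + l2 (restr Sᶜ v) ^ 2 := by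
  simp only [l2_sq, dotProduct, ← sum_add_distrib]
  refine sum_congr rfl fun i _ => ?_
  by_cases hi : i ∈ S <;> simp [restr, hi]

lemma restr_compl_sub {S : Finset (Fin n)} (x : Fin n → ℝ) {xb : Fin n → ℝ}
    (hxb : ∀ i ∉ S, xb i = 0) : restr Sᶜ (x - xb) = restr Sᶜ x := by
  funext i
  by_cases hi : i ∈ S <;> simp [restr, hi, hxb]

lemma mulVec_dotProduct_eq_zero {A : Matrix (Fin m) (Fin n) ℝ} {S : Finset (Fin n)}
    {u : Fin n → ℝ} {r : Fin m → ℝ} (hu : ∀ i ∉ S, u i = 0) (hr : ∀ i ∈ S, (Aᵀ *ᵥ r) i = 0) :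
    A *ᵥ u ⬝ᵥ r = 0 := by
  rw [dotProduct_comm, dotProduct_mulVec, ← mulVec_transpose]
  refine sum_eq_zero fun i _ => ?_
  by_cases hi : i ∈ S <;> simp [hi, hu, hr]

def RestrictedIsometry (A : Matrix (Fin m) (Fin n) ℝ) (s : ℕ) (δ : ℝ) : Prop :=
  ∀ v : Fin n → ℝ, spars v ≤ s →
    (1 - δ) * l2 v ^ 2 ≤ l2 (A *ᵥ v) ^ 2 ∧ l2 (A *ᵥ v) ^ 2 ≤ (1 + δ) * l2 v ^ 2

namespace RestrictedIsometry

variable {A : Matrix (Fin m) (Fin n) ℝ} {s : ℕ} {δ : ℝ}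

lemma nonneg (hA : RestrictedIsometry A s δ) {v : Fin n → ℝ} (hv : spars v ≤ s) (hv0 : v ≠ 0) :
    0 ≤ δ := by
  obtain ⟨hlow, hup⟩ := hA v hv
  have : 0 < l2 v ^ 2 := pow_pos ((l2_nonneg v).lt_of_ne' (mt l2_eq_zero.1 hv0)) 2
  nlinarith

lemma l2_mulVec_le (hA : RestrictedIsometry A s δ) {v : Fin n → ℝ} (hv : spars v ≤ s) :
    l2 (A *ᵥ v) ≤ √(1 + δ) * l2 v := by
  rw [← Real.sqrt_sq (l2_nonneg (A *ᵥ v)), ← Real.sqrt_sq (l2_nonneg v),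
    ← Real.sqrt_mul' _ (sq_nonneg _)]
  exact Real.sqrt_le_sqrt (hA v hv).2

variable {T : Finset (Fin n)} {u v : Fin n → ℝ}

lemma dotProduct_sub_le_half (hA : RestrictedIsometry A s δ) (hT : #T ≤ s)
    (hu : ∀ i ∉ T, u i = 0) (hv : ∀ i ∉ T, v i = 0) :
    u ⬝ᵥ v - A *ᵥ u ⬝ᵥ A *ᵥ v ≤ δ * (l2 u ^ 2 + l2 v ^ 2) / 2 := by
  have hadd := (hA (u + v) ((spars_le_card fun i hi => by simp [hu i hi, hv i hi]).trans hT)).1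
  have hsub := (hA (u - v) ((spars_le_card fun i hi => by simp [hu i hi, hv i hi]).trans hT)).2
  simp only [l2_sq, mulVec_add, mulVec_sub, add_dotProduct, dotProduct_add, sub_dotProduct,
    dotProduct_sub, dotProduct_comm v u, dotProduct_comm (A *ᵥ v) (A *ᵥ u)] at hadd hsub ⊢
  linarith

lemma dotProduct_sub_le (hA : RestrictedIsometry A s δ) (hT : #T ≤ s)
    (hu : ∀ i ∉ T, u i = 0) (hv : ∀ i ∉ T, v i = 0) :
    u ⬝ᵥ v - A *ᵥ u ⬝ᵥ A *ᵥ v ≤ δ * l2 u * l2 v := by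
  rcases eq_or_ne u 0 with rfl | hu0
  · simp
  rcases eq_or_ne v 0 with rfl | hv0
  · simp
  have hu' : 0 < l2 u := (l2_nonneg u).lt_of_ne' (mt l2_eq_zero.1 hu0)
  have hv' : 0 < l2 v := (l2_nonneg v).lt_of_ne' (mt l2_eq_zero.1 hv0)
  have h := hA.dotProduct_sub_le_half hT (u := (l2 u)⁻¹ • u) (v := (l2 v)⁻¹ • v)
    (fun i hi => by simp [hu i hi]) (fun i hi => by simp [hv i hi])
  simp only [l2_smul, mulVec_smul, smul_dotProduct, dotProduct_smul, smul_eq_mul,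
    abs_inv, abs_of_pos hu', abs_of_pos hv', inv_mul_cancel₀ hu'.ne', inv_mul_cancel₀ hv'.ne'] at h
  have := mul_le_mul_of_nonneg_left h (mul_pos hu' hv').le
  field_simp at this
  linarith

end RestrictedIsometry

lemma le_div_sqrt_add_div_of_sq_eq {D β a c w : ℝ} (hD₀ : 0 ≤ D) (hD₁ : D < 1) (hβ : 0 ≤ β)
    (ha : 0 ≤ a) (hw : 0 ≤ w) (hac : a ≤ D * c + β) (hc : c ^ 2 = a ^ 2 + w ^ 2) :
    c ≤ w / √(1 - D ^ 2) + β / (1 - D) := by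
  have hD : 0 < 1 - D ^ 2 := by nlinarith
  set r := √(1 - D ^ 2)
  have hr : 0 < r := Real.sqrt_pos.2 hD
  have hr2 : r ^ 2 = 1 - D ^ 2 := Real.sq_sqrt hD.le
  -- `c` lies below the larger root of `(1 - D²) c² - 2 D β c - (β² + w²)`.
  have hquad : (1 - D ^ 2) * c ^ 2 - 2 * D * β * c ≤ β ^ 2 + w ^ 2 := by
    nlinarith [mul_le_mul hac hac ha (ha.trans hac)]
  have hsq : ((1 - D ^ 2) * c - D * β) ^ 2 ≤ (β + r * w) ^ 2 := by
    nlinarith [mul_le_mul_of_nonneg_left hquad hD.le, mul_nonneg hβ (mul_nonneg hr.le hw)]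
  have hlin : (1 - D ^ 2) * c ≤ (1 + D) * β + r * w := by
    nlinarith [abs_le_of_sq_le_sq' hsq (by positivity)]
  have hRHS : w / r + β / (1 - D) = ((1 + D) * β + r * w) / (1 - D ^ 2) := by
    have : 1 - D ≠ 0 := by linarith
    field_simp
    linear_combination (w * D - w) * hr2
  rw [hRHS, le_div_iff₀ hD]
  linarith

section Recovery

variable {A : Matrix (Fin m) (Fin n) ℝ} {S T : Finset (Fin n)} {s s' : ℕ} {δ₁ δ₂ : ℝ}

lemma l2_restr_le {h : Fin n → ℝ} {e : Fin m → ℝ} (hA₁ : RestrictedIsometry A s δ₁)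
    (hA₂ : RestrictedIsometry A s' δ₂) (hT : #T ≤ s) (hS : #S ≤ s') (hST : S ⊆ T)
    (hh : ∀ i ∉ T, h i = 0) (hδ₁ : 0 ≤ δ₁) (hnormal : ∀ i ∈ S, (Aᵀ *ᵥ (A *ᵥ h + e)) i = 0) :
    l2 (restr S h) ≤ δ₁ * l2 h + √(1 + δ₂) * l2 e := by
  set u := restr S h
  have hu : ∀ i ∉ S, u i = 0 := fun i hi => restr_of_notMem h hi
  have horth : A *ᵥ u ⬝ᵥ (A *ᵥ h + e) = 0 := mulVec_dotProduct_eq_zero hu hnormal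
  have hsq : l2 u ^ 2 ≤ (δ₁ * l2 h + √(1 + δ₂) * l2 e) * l2 u :=
    calc l2 u ^ 2 = (u ⬝ᵥ h - A *ᵥ u ⬝ᵥ A *ᵥ h) + A *ᵥ u ⬝ᵥ -e := by
          rw [dotProduct_add] at horth
          rw [← restr_dotProduct_self, dotProduct_neg]
          linarith
      _ ≤ δ₁ * l2 u * l2 h + l2 (A *ᵥ u) * l2 (-e) :=
          add_le_add (hA₁.dotProduct_sub_le hT (fun i hi => hu i (mt (@hST i) hi)) hh)
            (dotProduct_le_l2_mul_l2 _ _)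
      _ ≤ δ₁ * l2 u * l2 h + √(1 + δ₂) * l2 u * l2 e := by
          rw [l2_neg]
          exact add_le_add_right (mul_le_mul_of_nonneg_right
            (hA₂.l2_mulVec_le ((spars_le_card hu).trans hS)) (l2_nonneg e)) _
      _ = (δ₁ * l2 h + √(1 + δ₂) * l2 e) * l2 u := by ring
  have hK : 0 ≤ δ₁ * l2 h + √(1 + δ₂) * l2 e := by
    have := l2_nonneg h; have := l2_nonneg e; positivity
  nlinarith [l2_nonneg u]

theorem l2_sub_le {x xb : Fin n → ℝ} {e y : Fin m → ℝ} (hA₁ : RestrictedIsometry A s δ₁)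
    (hA₂ : RestrictedIsometry A s' δ₂) (hT : #T ≤ s) (hS : #S ≤ s') (hST : S ⊆ T)
    (hx : ∀ i ∉ T, x i = 0) (hxb : ∀ i ∉ S, xb i = 0) (hy : y = A *ᵥ x + e)
    (hnormal : ∀ i ∈ S, (Aᵀ *ᵥ (A *ᵥ xb - y)) i = 0) (hδ₁ : δ₁ < 1) :
    l2 (x - xb) ≤ l2 (restr Sᶜ x) / √(1 - δ₁ ^ 2) + √(1 + δ₂) * l2 e / (1 - δ₁) := by
  have hh : ∀ i ∉ T, (x - xb) i = 0 := fun i hi => by simp [hx i hi, hxb i (mt (@hST i) hi)]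
  rcases eq_or_ne (x - xb) 0 with h0 | h0
  · rw [h0, l2_zero]
    have := l2_nonneg (restr Sᶜ x); have := l2_nonneg e
    have : 0 < 1 - δ₁ := by linarith
    positivity
  have hδ₁₀ : 0 ≤ δ₁ := hA₁.nonneg ((spars_le_card hh).trans hT) h0
  have hresidual : A *ᵥ (x - xb) + e = -(A *ᵥ xb - y) := by
    rw [hy, mulVec_sub]; abel
  have hnormal' : ∀ i ∈ S, (Aᵀ *ᵥ (A *ᵥ (x - xb) + e)) i = 0 := fun i hi => by
    rw [hresidual, mulVec_neg, Pi.neg_apply, hnormal i hi, neg_zero]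
  have hpythagoras : l2 (x - xb) ^ 2 = l2 (restr S (x - xb)) ^ 2 + l2 (restr Sᶜ x) ^ 2 := by
    rw [l2_sq_eq_restr_add_restr_compl S, restr_compl_sub x hxb]
  exact le_div_sqrt_add_div_of_sq_eq hδ₁₀ hδ₁ (by have := l2_nonneg e; positivity)
    (l2_nonneg _) (l2_nonneg _) (l2_restr_le hA₁ hA₂ hT hS hST hh hδ₁₀ hnormal') hpythagoras

end Recovery

theorem stmt5 {M N : ℕ} (A : Matrix (Fin M) (Fin N) ℝ)
    (x : Fin N → ℝ) (e : Fin M → ℝ) (y : Fin M → ℝ)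
    (hy : y = A.mulVec x + e)
    (s₁ s₂ : ℕ) (hx : spars x ≤ s₁)
    (S : Finset (Fin N)) (hS : S.card = s₂)
    (xb : Fin N → ℝ)
    -- x̄ is supported on S and x̄_S = A_S† y, characterized by the normal equations
    (hxbsupp : ∀ i ∉ S, xb i = 0)
    (hxbls : ∀ i ∈ S, ∑ j, A j i * (A.mulVec xb j - y j) = 0)
    (δ₁ δ₂ : ℝ) (hδ₁ : δ₁ < 1)
    (hRIP₁ : ∀ v : Fin N → ℝ, spars v ≤ s₁ + s₂ →
      (1 - δ₁) * (l2 v) ^ 2 ≤ (l2 (A.mulVec v)) ^ 2 ∧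
      (l2 (A.mulVec v)) ^ 2 ≤ (1 + δ₁) * (l2 v) ^ 2)
    (hRIP₂ : ∀ v : Fin N → ℝ, spars v ≤ s₂ →
      (1 - δ₂) * (l2 v) ^ 2 ≤ (l2 (A.mulVec v)) ^ 2 ∧
      (l2 (A.mulVec v)) ^ 2 ≤ (1 + δ₂) * (l2 v) ^ 2) :
    l1 (x - xb) ≤ Real.sqrt ((s₁ + s₂) / (1 - δ₁ ^ 2)) * l1 (restr Sᶜ x) + (Real.sqrt ((s₁ + s₂) * (1 + δ₂)) / (1 - δ₁)) * l2 e := by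
  set T : Finset (Fin N) := ({i | x i ≠ 0} : Finset (Fin N)) ∪ S
  have hT : #T ≤ s₁ + s₂ := (card_union_le _ _).trans (by rw [← spars_eq_card_filter, hS]; omega)
  have hST : S ⊆ T := subset_union_right
  have hxT : ∀ i ∉ T, x i = 0 := fun i hi => by simpa using (notMem_union.1 hi).1
  have hsparse : spars (x - xb) ≤ s₁ + s₂ :=
    (spars_le_card fun i hi => by simp [hxT i hi, hxbsupp i (mt (@hST i) hi)]).trans hT
  have hl2 := l2_sub_le hRIP₁ hRIP₂ hT hS.le hST hxT hxbsupp hy hxbls hδ₁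
  have hk : (0 : ℝ) ≤ s₁ + s₂ := by positivity
  calc l1 (x - xb) ≤ √(s₁ + s₂) * l2 (x - xb) := by
        refine (l1_le_sqrt_spars_mul_l2 _).trans (mul_le_mul_of_nonneg_right ?_ (l2_nonneg _))
        exact Real.sqrt_le_sqrt (by exact_mod_cast hsparse)
    _ ≤ √(s₁ + s₂) * (l2 (restr Sᶜ x) / √(1 - δ₁ ^ 2) + √(1 + δ₂) * l2 e / (1 - δ₁)) := by
        gcongr
    _ = √((s₁ + s₂) / (1 - δ₁ ^ 2)) * l2 (restr Sᶜ x)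
          + √((s₁ + s₂) * (1 + δ₂)) / (1 - δ₁) * l2 e := by
        rw [Real.sqrt_div hk, Real.sqrt_mul hk]
        ring
    _ ≤ _ := by
        gcongr
        exact l2_le_l1 _
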